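/- arXiv:1411.2045 — 2 statements merged into one kernel-verified Lean document; each statement's English description precedes it below -/
import Mathlib

section
/- Let {Ê_l}_{l∈l̄} (l̄={l₁,…,l_L}) be an ensemble of estimators of a parameter E computed from T samples, satisfying conditions C.1 and C.2. Suppose the weight vector w₀ = (w₀(l₁),…,w₀(l_L)) satisfies Σ_{l∈l̄} w₀(l) = 1 and γ_{w₀}(i) := Σ_{l∈l̄} w₀(l) ψ_i(l) = 0 for every i ∈ J. Then the weighted ensemble estimator Ê_{w₀} = Σ_{l∈l̄} w₀(l) Ê_l has mean squared error E[(Ê_{w₀} − E)²] = O(1/T) as T → ∞. -/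
/-!
Write `m_l(T)` for the mean of `Ê_l`. Since the weights sum to one, the mean squared error of
`Ê_{w₀}` splits into its variance and its squared bias `Σ_l w₀(l) (m_l(T) - E)`. The variance of a
sum of `L` square-integrable variables is at most `L` times the sum of their variances
(Cauchy–Schwarz), hence `O(1/T)` by C.2. Because `w₀` annihilates every `ψ_i`, the whole expansion
of C.1 cancels in the weighted bias, which is therefore `O(1/√T)`, so its square is `O(1/T)`.
-/

open MeasureTheory ProbabilityTheory Filter Asymptotics Finset

namespace ProbabilityTheory

variable {Ω ι : Type*} {m : MeasurableSpace Ω} {μ : Measure Ω}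

lemma integral_sub_const_sq_eq_variance_add_sq [IsProbabilityMeasure μ] {X : Ω → ℝ}
    (hX : MemLp X 2 μ) (θ : ℝ) :
    ∫ ω, (X ω - θ) ^ 2 ∂μ = Var[X; μ] + (μ[X] - θ) ^ 2 := by
  have hXθ : MemLp (fun ω => X ω - θ) 2 μ := hX.sub (memLp_const θ)
  have hmean : μ[fun ω => X ω - θ] = μ[X] - θ := by
    rw [integral_sub (hX.integrable one_le_two) (integrable_const θ), integral_const]
    simp
  rw [← variance_sub_const hX.aestronglyMeasurable θ, variance_eq_sub hXθ, hmean]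
  simp only [Pi.pow_apply, sub_add_cancel]

lemma variance_sum_le_card_mul_sum [IsFiniteMeasure μ] {s : Finset ι} {X : ι → Ω → ℝ}
    (hX : ∀ i ∈ s, MemLp (X i) 2 μ) :
    Var[fun ω => ∑ i ∈ s, X i ω; μ] ≤ #s * ∑ i ∈ s, Var[X i; μ] := by
  set Y : ι → Ω → ℝ := fun i ω => X i ω - μ[X i]
  have hY : ∀ i ∈ s, MemLp (Y i) 2 μ := fun i hi => (hX i hi).sub (memLp_const _)
  have hmean : μ[fun ω => ∑ i ∈ s, X i ω] = ∑ i ∈ s, μ[X i] :=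
    integral_finsetSum s fun i hi => (hX i hi).integrable one_le_two
  have hcentered : ∀ ω, ∑ i ∈ s, X i ω - μ[fun ω => ∑ i ∈ s, X i ω] = ∑ i ∈ s, Y i ω := by
    intro ω
    simp only [Y, hmean, sum_sub_distrib]
  calc Var[fun ω => ∑ i ∈ s, X i ω; μ]
      = ∫ ω, (∑ i ∈ s, Y i ω) ^ 2 ∂μ := by
        rw [variance_eq_integral (aemeasurable_fun_sum s fun i hi => (hX i hi).aemeasurable)]
        simp only [hcentered]
    _ ≤ ∫ ω, (#s : ℝ) * ∑ i ∈ s, Y i ω ^ 2 ∂μ :=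
        integral_mono (memLp_finsetSum s hY).integrable_sq
          ((integrable_finsetSum s fun i hi => (hY i hi).integrable_sq).const_mul _)
          fun ω => sq_sum_le_card_mul_sum_sq
    _ = #s * ∑ i ∈ s, Var[X i; μ] := by
        rw [integral_const_mul, integral_finsetSum s fun i hi => (hY i hi).integrable_sq]
        congr 1
        exact sum_congr rfl fun i hi => (variance_eq_integral (hX i hi).aemeasurable).symm

variable [Fintype ι]

lemma variance_weighted_sum_le [IsFiniteMeasure μ] (w : ι → ℝ) {X : ι → Ω → ℝ}
    (hX : ∀ i, MemLp (X i) 2 μ) :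
    Var[fun ω => ∑ i, w i * X i ω; μ] ≤ Fintype.card ι * ∑ i, w i ^ 2 * Var[X i; μ] := by
  simpa only [card_univ, variance_const_mul] using
    variance_sum_le_card_mul_sum (s := univ) (X := fun i ω => w i * X i ω)
      fun i _ => (hX i).const_mul (w i)

lemma integral_weighted_sum_sub_sq [IsProbabilityMeasure μ] {w : ι → ℝ} (hw : ∑ i, w i = 1)
    {X : ι → Ω → ℝ} (hX : ∀ i, MemLp (X i) 2 μ) (θ : ℝ) :
    ∫ ω, (∑ i, w i * X i ω - θ) ^ 2 ∂μ
      = Var[fun ω => ∑ i, w i * X i ω; μ] + (∑ i, w i * (μ[X i] - θ)) ^ 2 := by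
  have hwX : ∀ i, MemLp (fun ω => w i * X i ω) 2 μ := fun i => (hX i).const_mul (w i)
  have hbias : μ[fun ω => ∑ i, w i * X i ω] - θ = ∑ i, w i * (μ[X i] - θ) := by
    rw [integral_finsetSum univ fun i _ => (hwX i).integrable one_le_two]
    simp only [integral_const_mul, mul_sub, sum_sub_distrib, ← sum_mul, hw, one_mul]
  rw [integral_sub_const_sq_eq_variance_add_sq (memLp_finsetSum univ fun i _ => hwX i), hbias]

end ProbabilityTheory

lemma Finset.sum_mul_sum_eq_zero_of_forall_sum_mul_eq_zero {ι κ : Type*} {s : Finset ι}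
    {J : Finset κ} (w : ι → ℝ) (u : κ → ℝ) {ψ : κ → ι → ℝ}
    (hw : ∀ i ∈ J, ∑ k ∈ s, w k * ψ i k = 0) :
    ∑ k ∈ s, w k * ∑ i ∈ J, u i * ψ i k = 0 := by
  simp_rw [mul_sum]
  rw [sum_comm]
  refine sum_eq_zero fun i hi => ?_
  simp_rw [mul_left_comm (w _), ← mul_sum, hw i hi, mul_zero]

namespace Asymptotics

variable {α ι κ : Type*} {l : Filter α}

lemma IsBigO.weighted_sum_of_expansion [Fintype ι] {J : Finset κ} (w : ι → ℝ)
    {b : ι → α → ℝ} {u : κ → α → ℝ} {ψ : κ → ι → ℝ} {g : α → ℝ}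
    (hb : ∀ k, (fun x => b k x - ∑ i ∈ J, u i x * ψ i k) =O[l] g)
    (hw : ∀ i ∈ J, ∑ k, w k * ψ i k = 0) :
    (fun x => ∑ k, w k * b k x) =O[l] g := by
  refine (IsBigO.sum fun k (_ : k ∈ univ) => (hb k).const_mul_left (w k)).congr_left fun x => ?_
  rw [Finset.sum_apply]
  simp only [mul_sub, sum_sub_distrib,
    sum_mul_sum_eq_zero_of_forall_sum_mul_eq_zero w (fun i => u i x) hw, sub_zero]

end Asymptotics

theorem ensemble_estimator_optimal_weights_MSE_general
    {Ω : Type*} [MeasurableSpace Ω] (P : Measure Ω) [IsProbabilityMeasure P]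
    (L d : ℕ)
    (lbar : Fin L → ℝ)
    (Ehat : Fin L → ℕ → Ω → ℝ) (θ : ℝ)
    (hL2 : ∀ l T, MemLp (Ehat l T) 2 P)
    (J : Finset ℕ)
    (c : ℕ → ℝ) (ψ : ℕ → ℝ → ℝ)
    -- condition C.1
    (hC1 : ∀ l, (fun T : ℕ => (∫ ω, Ehat l T ω ∂P) - θ
        - ∑ i ∈ J, c i * ψ i (lbar l) * (T : ℝ) ^ (-(i : ℝ) / (2 * d)))
        =O[atTop] fun T : ℕ => 1 / Real.sqrt T)
    -- condition C.2
    (cv : ℝ)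
    (hC2 : ∀ l, (fun T : ℕ => variance (Ehat l T) P - cv / T)
        =o[atTop] fun T : ℕ => 1 / (T : ℝ))
    -- the weights sum to one and zero out the lower-order bias terms
    (w₀ : Fin L → ℝ)
    (hw₀sum : ∑ l, w₀ l = 1)
    (hw₀γ : ∀ i ∈ J, ∑ l, w₀ l * ψ i (lbar l) = 0) :
    (fun T : ℕ => ∫ ω, (∑ l, w₀ l * Ehat l T ω - θ) ^ 2 ∂P)
      =O[atTop] fun T : ℕ => 1 / (T : ℝ) := by
  have hbias : (fun T : ℕ => ∑ l, w₀ l * ((∫ ω, Ehat l T ω ∂P) - θ))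
      =O[atTop] fun T : ℕ => 1 / Real.sqrt T := by
    refine IsBigO.weighted_sum_of_expansion
      (u := fun i (T : ℕ) => c i * (T : ℝ) ^ (-(i : ℝ) / (2 * d))) w₀
      (fun l => (hC1 l).congr_left fun T => ?_) hw₀γ
    simp only [mul_right_comm (c _)]
  have hbias_sq : (fun T : ℕ => (∑ l, w₀ l * ((∫ ω, Ehat l T ω ∂P) - θ)) ^ 2)
      =O[atTop] fun T : ℕ => 1 / (T : ℝ) :=
    (hbias.mul hbias).congr (fun T => (sq _).symm) fun T => by
      rw [div_mul_div_comm, one_mul, Real.mul_self_sqrt T.cast_nonneg]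
  have hvar : ∀ l, (fun T : ℕ => Var[Ehat l T; P]) =O[atTop] fun T : ℕ => 1 / (T : ℝ) := fun l =>
    ((hC2 l).isBigO.add ((isBigO_refl _ _).const_mul_left cv)).congr_left fun T => by ring
  have hvar_sum : (fun T : ℕ => Var[fun ω => ∑ l, w₀ l * Ehat l T ω; P])
      =O[atTop] fun T : ℕ => 1 / (T : ℝ) := by
    refine IsBigO.trans (isBigO_of_le' (c := L) _ fun T => ?_)
      ((IsBigO.sum fun l (_ : l ∈ univ) => (hvar l).const_mul_left (w₀ l ^ 2)).congr_left
        fun T => Finset.sum_apply T _ _)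
    have hnonneg : 0 ≤ ∑ l, w₀ l ^ 2 * Var[Ehat l T; P] :=
      sum_nonneg fun l _ => mul_nonneg (sq_nonneg _) (variance_nonneg _ _)
    rw [Real.norm_of_nonneg (variance_nonneg _ _), Real.norm_of_nonneg hnonneg]
    simpa using variance_weighted_sum_le w₀ fun l => hL2 l T
  exact (hvar_sum.add hbias_sq).congr_left fun T =>
    (integral_weighted_sum_sub_sq hw₀sum (fun l => hL2 l T) θ).symm

/-- **Optimally weighted ensemble estimation (Theorem 1).**
Given an ensemble of estimators `Ehat l T` (indexed by `l ∈ l̄` and the sample size `T`)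
of a parameter `θ`, satisfying condition `C.1` (bias expansion
`Bias(Ê_l) = Σ_{i∈J} c_i ψ_i(l) T^{-i/(2d)} + O(1/√T)`) and condition `C.2`
(variance `Var[Ê_l] = c_v/T + o(1/T)`), if the weight vector `w₀` sums to one and
annihilates the basis functions, `γ_{w₀}(i) = Σ_l w₀(l) ψ_i(l) = 0` for all `i ∈ J`,
then the weighted ensemble estimator has MSE `E[(Ê_{w₀} − θ)²] = O(1/T)`. -/
theorem ensemble_estimator_optimal_weights_MSE
    {Ω : Type*} [MeasurableSpace Ω] (P : Measure Ω) [IsProbabilityMeasure P]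
    (L d : ℕ) (hd : 0 < d)
    (lbar : Fin L → ℝ) (hlpos : ∀ i, 0 < lbar i) (hlinj : Function.Injective lbar)
    (Ehat : Fin L → ℕ → Ω → ℝ) (θ : ℝ)
    (hL2 : ∀ l T, MemLp (Ehat l T) 2 P)
    (J : Finset ℕ) (hJcard : J.card < L)
    (hJpos : ∀ i ∈ J, 0 < i) (hJle : ∀ i ∈ J, i ≤ d)
    (c : ℕ → ℝ) (ψ : ℕ → ℝ → ℝ)
    -- condition C.1
    (hC1 : ∀ l, (fun T : ℕ => (∫ ω, Ehat l T ω ∂P) - θ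
        - ∑ i ∈ J, c i * ψ i (lbar l) * (T : ℝ) ^ (-(i : ℝ) / (2 * d)))
        =O[atTop] fun T : ℕ => 1 / Real.sqrt T)
    -- condition C.2
    (cv : ℝ)
    (hC2 : ∀ l, (fun T : ℕ => variance (Ehat l T) P - cv / T)
        =o[atTop] fun T : ℕ => 1 / (T : ℝ))
    -- the weights sum to one and zero out the lower-order bias terms
    (w₀ : Fin L → ℝ)
    (hw₀sum : ∑ l, w₀ l = 1)
    (hw₀γ : ∀ i ∈ J, ∑ l, w₀ l * ψ i (lbar l) = 0) :
    (fun T : ℕ => ∫ ω, (∑ l, w₀ l * Ehat l T ω - θ) ^ 2 ∂P)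
      =O[atTop] fun T : ℕ => 1 / (T : ℝ) :=
  ensemble_estimator_optimal_weights_MSE_general P L d lbar Ehat θ hL2 J c ψ hC1 cv hC2 w₀ hw₀sum
    hw₀γ
end

section
/- Let {Ê_l}_{l∈l̄} be an ensemble of estimators of a parameter E computed from T samples, satisfying conditions C.1 and C.2. Fix ε > 0 and η > 0, and suppose the weight vector w satisfies Σ_{l∈l̄} w(l) = 1, ‖w‖₂² ≤ η, and |γ_w(i)| ≤ ε T^{i/(2d) − 1/2} for every i ∈ J, where γ_w(i) = Σ_{l∈l̄} w(l) ψ_i(l). Then the weighted ensemble estimator Ê_w = Σ_{l∈l̄} w(l) Ê_l has mean squared error E[(Ê_w − E)²] = O(1/T) as T → ∞; that is, relaxing the exact constraints γ_w(i)=0 to decay at rate O(1/√T) retains the parametric MSE rate O(1/T). -/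
open MeasureTheory ProbabilityTheory Filter Asymptotics

noncomputable section

/-!
The mean squared error is the variance plus the squared bias. By Cauchy–Schwarz the variance
of `∑ w_l Ê_l` is at most `L ∑ w_l² Var Ê_l ≤ L η ∑ Var Ê_l = O(1/T)`. Since `∑ w_l = 1`, the
bias is `∑ w_l (E Ê_l − θ)`; expanding `E Ê_l` by C.1 turns it into
`∑_{i ∈ J} c_i γ_w(i) T^(−i/(2d))` plus a bounded combination of `O(1/√T)` remainders, and the
relaxed constraints make every term of the first sum `O(1/√T)` as well.
-/

open Finset

section BiasVariance

variable {Ω : Type*} [MeasurableSpace Ω] {P : Measure Ω}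

theorem integral_sub_sq_eq_variance_add_sq [IsProbabilityMeasure P] {X : Ω → ℝ}
    (hX : MemLp X 2 P) (a : ℝ) :
    ∫ ω, (X ω - a) ^ 2 ∂P = variance X P + (∫ ω, X ω ∂P - a) ^ 2 := by
  have hXa : MemLp (fun ω => X ω - a) 2 P := hX.sub (memLp_const a)
  rw [← variance_sub_const hX.aestronglyMeasurable a, variance_eq_sub hXa,
    integral_sub (hX.integrable one_le_two) (integrable_const a)]
  simp

theorem variance_sum_le_card_mul_sum_variance {ι : Type*} (s : Finset ι) {X : ι → Ω → ℝ}
    [IsFiniteMeasure P] (hX : ∀ i ∈ s, MemLp (X i) 2 P) :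
    variance (fun ω => ∑ i ∈ s, X i ω) P ≤ #s * ∑ i ∈ s, variance (X i) P := by
  set Y : ι → Ω → ℝ := fun i ω => X i ω - ∫ ω', X i ω' ∂P
  have hY : ∀ i ∈ s, Integrable (fun ω => Y i ω ^ 2) P :=
    fun i hi => ((hX i hi).sub (memLp_const _)).integrable_sq
  have hcentered : ∀ ω, ∑ i ∈ s, X i ω - ∫ ω', ∑ i ∈ s, X i ω' ∂P = ∑ i ∈ s, Y i ω := by
    intro ω
    rw [integral_finsetSum s fun i hi => (hX i hi).integrable one_le_two, ← sum_sub_distrib]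
  calc variance (fun ω => ∑ i ∈ s, X i ω) P
      = ∫ ω, (∑ i ∈ s, Y i ω) ^ 2 ∂P := by
        rw [variance_eq_integral (s.aemeasurable_fun_sum fun i hi => (hX i hi).aemeasurable)]
        simp_rw [hcentered]
    _ ≤ ∫ ω, #s * ∑ i ∈ s, Y i ω ^ 2 ∂P :=
        integral_mono_of_nonneg (.of_forall fun _ => sq_nonneg _)
          ((integrable_finsetSum s hY).const_mul _)
          (.of_forall fun ω => sq_sum_le_card_mul_sum_sq)
    _ = #s * ∑ i ∈ s, variance (X i) P := by
        rw [integral_const_mul, integral_finsetSum s hY]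
        congr 1
        exact sum_congr rfl fun i hi => (variance_eq_integral (hX i hi).aemeasurable).symm

theorem variance_weighted_sum_le [IsFiniteMeasure P] {ι : Type*} (s : Finset ι) (w : ι → ℝ)
    {X : ι → Ω → ℝ} (hX : ∀ i ∈ s, MemLp (X i) 2 P) :
    variance (fun ω => ∑ i ∈ s, w i * X i ω) P ≤ #s * ∑ i ∈ s, w i ^ 2 * variance (X i) P := by
  simpa only [variance_const_mul] using
    variance_sum_le_card_mul_sum_variance s (X := fun i ω => w i * X i ω)
      fun i hi => (hX i hi).const_mul (w i)

theorem integral_weighted_sum_sub {ι : Type*} (s : Finset ι) {w : ι → ℝ} (hw : ∑ i ∈ s, w i = 1)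
    {X : ι → Ω → ℝ} (hX : ∀ i ∈ s, Integrable (X i) P) (θ : ℝ) :
    ∫ ω, ∑ i ∈ s, w i * X i ω ∂P - θ = ∑ i ∈ s, w i * (∫ ω, X i ω ∂P - θ) := by
  rw [integral_finsetSum s fun i hi => (hX i hi).const_mul (w i)]
  simp only [integral_const_mul, mul_sub, sum_sub_distrib, ← sum_mul, hw, one_mul]

end BiasVariance

theorem sum_mul_eq_expansion_add_remainder {ι κ : Type*} (s : Finset ι) (J : Finset κ)
    (w x : ι → ℝ) (c t : κ → ℝ) (ψ : κ → ι → ℝ) :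
    ∑ l ∈ s, w l * x l = ∑ i ∈ J, c i * (∑ l ∈ s, w l * ψ i l) * t i
      + ∑ l ∈ s, w l * (x l - ∑ i ∈ J, c i * ψ i l * t i) := by
  simp only [mul_sub, sum_sub_distrib, mul_sum, sum_mul, mul_assoc, mul_left_comm (w _)]
  rw [sum_comm (s := J)]
  ring

theorem Asymptotics.IsBigO.sum_mul_of_abs_le {α ι : Type*} {l : Filter α} (s : Finset ι)
    {u f : ι → α → ℝ} {g : α → ℝ} {C : ℝ} (hu : ∀ i ∈ s, ∀ x, |u i x| ≤ C)
    (hf : ∀ i ∈ s, f i =O[l] g) : (fun x => ∑ i ∈ s, u i x * f i x) =O[l] g :=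
  IsBigO.fun_sum fun i hi =>
    ((IsBigO.of_bound C (.of_forall fun x => by simpa using hu i hi x) :
      u i =O[l] fun _ => (1 : ℝ)).mul (hf i hi)).congr_right fun _ => one_mul _

theorem isBigO_variance_weighted_sum {Ω α ι : Type*} [MeasurableSpace Ω] {P : Measure Ω}
    [IsFiniteMeasure P] [Fintype ι] {l : Filter α} {X : ι → α → Ω → ℝ} {w : α → ι → ℝ}
    {C : ℝ} {g : α → ℝ} (hX : ∀ i x, MemLp (X i x) 2 P) (hw : ∀ x i, |w x i ^ 2| ≤ C)
    (hvar : ∀ i, (fun x => variance (X i x) P) =O[l] g) :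
    (fun x => variance (fun ω => ∑ i, w x i * X i x ω) P) =O[l] g := by
  refine .trans (isBigO_of_le _ fun x => ?_) (((IsBigO.sum_mul_of_abs_le univ
    (fun i _ x => hw x i) fun i _ => hvar i).const_mul_left (Fintype.card ι : ℝ)))
  rw [Real.norm_of_nonneg (variance_nonneg _ _), Real.norm_eq_abs]
  refine le_trans ?_ (le_abs_self _)
  simpa using variance_weighted_sum_le univ (w x) fun i _ => hX i x

theorem isBigO_mul_rpow_neg_of_abs_le {γ : ℕ → ℝ} {a ε : ℝ}
    (hγ : ∀ T : ℕ, 1 ≤ T → |γ T| ≤ ε * (T : ℝ) ^ (a - 1 / 2)) :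
    (fun T : ℕ => γ T * (T : ℝ) ^ (-a)) =O[atTop] fun T : ℕ => 1 / Real.sqrt T := by
  refine IsBigO.of_bound ε ?_
  filter_upwards [eventually_ge_atTop 1] with T hT
  have hT0 : (0 : ℝ) < T := by exact_mod_cast hT
  have hrpow : (T : ℝ) ^ (a - 1 / 2) * (T : ℝ) ^ (-a) = 1 / Real.sqrt T := by
    rw [← Real.rpow_add hT0, Real.sqrt_eq_rpow, one_div ((T : ℝ) ^ (1 / 2 : ℝ)),
      ← Real.rpow_neg hT0.le]
    ring_nf
  calc ‖γ T * (T : ℝ) ^ (-a)‖ = |γ T| * (T : ℝ) ^ (-a) := by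
        rw [Real.norm_eq_abs, abs_mul, abs_of_nonneg (Real.rpow_nonneg hT0.le _)]
    _ ≤ ε * (T : ℝ) ^ (a - 1 / 2) * (T : ℝ) ^ (-a) := by gcongr; exact hγ T hT
    _ = ε * ‖1 / Real.sqrt T‖ := by
        rw [mul_assoc, hrpow, Real.norm_of_nonneg (by positivity)]

theorem ensemble_estimator_relaxed_weights_MSE_general
    {Ω : Type*} [MeasurableSpace Ω] (P : Measure Ω) [IsProbabilityMeasure P]
    (L d : ℕ)
    (lbar : Fin L → ℝ)
    (Ehat : Fin L → ℕ → Ω → ℝ) (θ : ℝ)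
    (hL2 : ∀ l T, MemLp (Ehat l T) 2 P)
    (J : Finset ℕ)
    (c : ℕ → ℝ) (ψ : ℕ → ℝ → ℝ)
    -- condition C.1
    (hC1 : ∀ l, (fun T : ℕ => (∫ ω, Ehat l T ω ∂P) - θ
        - ∑ i ∈ J, c i * ψ i (lbar l) * (T : ℝ) ^ (-(i : ℝ) / (2 * d)))
        =O[atTop] fun T : ℕ => 1 / Real.sqrt T)
    -- condition C.2
    (cv : ℝ)
    (hC2 : ∀ l, (fun T : ℕ => variance (Ehat l T) P - cv / T)
        =o[atTop] fun T : ℕ => 1 / (T : ℝ))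
    -- relaxed weight constraints
    (ε η : ℝ)
    (w : ℕ → Fin L → ℝ)
    (hwsum : ∀ T, ∑ l, w T l = 1)
    (hwnorm : ∀ T, ∑ l, (w T l) ^ 2 ≤ η)
    (hwγ : ∀ i ∈ J, ∀ T : ℕ, 1 ≤ T →
        |∑ l, w T l * ψ i (lbar l)| ≤ ε * (T : ℝ) ^ ((i : ℝ) / (2 * d) - 1 / 2)) :
    (fun T : ℕ => ∫ ω, (∑ l, w T l * Ehat l T ω - θ) ^ 2 ∂P)
      =O[atTop] fun T : ℕ => 1 / (T : ℝ) := by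
  have hw_sq (T l) : |w T l ^ 2| ≤ η := by
    rw [abs_sq]
    exact (single_le_sum (fun l _ => sq_nonneg (w T l)) (mem_univ l)).trans (hwnorm T)
  have hw (T l) : |w T l| ≤ √η := Real.abs_le_sqrt (abs_sq (w T l) ▸ hw_sq T l)
  have hvar_l (l) : (fun T : ℕ => variance (Ehat l T) P) =O[atTop] fun T : ℕ => 1 / (T : ℝ) :=
    ((hC2 l).isBigO.add ((isBigO_refl _ _).const_mul_left cv)).congr_left fun T => by ring
  have hvar := isBigO_variance_weighted_sum hL2 hw_sq hvar_l
  have hbias : (fun T : ℕ => ∑ l, w T l * (∫ ω, Ehat l T ω ∂P - θ))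
      =O[atTop] fun T : ℕ => 1 / √T := by
    refine .congr_left ?_ fun T => (sum_mul_eq_expansion_add_remainder univ J (w T)
      (fun l => ∫ ω, Ehat l T ω ∂P - θ) c (fun i => (T : ℝ) ^ (-(i : ℝ) / (2 * d)))
      fun i l => ψ i (lbar l)).symm
    refine (IsBigO.fun_sum fun i hi => ?_).add
      (IsBigO.sum_mul_of_abs_le univ (fun l _ T => hw T l) fun l _ => hC1 l)
    simp_rw [mul_assoc, neg_div]
    exact (isBigO_mul_rpow_neg_of_abs_le (hwγ i hi)).const_mul_left (c i)
  have hmse (T : ℕ) : ∫ ω, (∑ l, w T l * Ehat l T ω - θ) ^ 2 ∂P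
      = variance (fun ω => ∑ l, w T l * Ehat l T ω) P
        + (∑ l, w T l * (∫ ω, Ehat l T ω ∂P - θ)) ^ 2 := by
    rw [integral_sub_sq_eq_variance_add_sq (memLp_finsetSum univ fun l _ =>
        (hL2 l T).const_mul (w T l)) θ,
      integral_weighted_sum_sub univ (hwsum T) (fun l _ => (hL2 l T).integrable one_le_two)]
  refine (hvar.add ((hbias.pow 2).congr_right fun T => ?_)).congr_left fun T => (hmse T).symm
  rw [div_pow, one_pow, Real.sq_sqrt T.cast_nonneg]

/-- **Relaxed optimally weighted ensemble estimation.**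
Given an ensemble of estimators `Ehat l T` of a parameter `θ` satisfying conditions
`C.1` and `C.2`, if for each sample size `T` the weight vector `w T` sums to one, has
`‖w‖₂² ≤ η`, and satisfies the relaxed constraints
`|γ_w(i)| ≤ ε T^(i/(2d) - 1/2)` for all `i ∈ J`, then the weighted ensemble estimator
retains the parametric MSE rate: `E[(Ê_w − θ)²] = O(1/T)`. -/
theorem ensemble_estimator_relaxed_weights_MSE
    {Ω : Type*} [MeasurableSpace Ω] (P : Measure Ω) [IsProbabilityMeasure P]
    (L d : ℕ) (hd : 0 < d)
    (lbar : Fin L → ℝ) (hlpos : ∀ i, 0 < lbar i) (hlinj : Function.Injective lbar)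
    (Ehat : Fin L → ℕ → Ω → ℝ) (θ : ℝ)
    (hL2 : ∀ l T, MemLp (Ehat l T) 2 P)
    (J : Finset ℕ) (hJcard : J.card < L)
    (hJpos : ∀ i ∈ J, 0 < i) (hJle : ∀ i ∈ J, i ≤ d)
    (c : ℕ → ℝ) (ψ : ℕ → ℝ → ℝ)
    -- condition C.1
    (hC1 : ∀ l, (fun T : ℕ => (∫ ω, Ehat l T ω ∂P) - θ
        - ∑ i ∈ J, c i * ψ i (lbar l) * (T : ℝ) ^ (-(i : ℝ) / (2 * d)))
        =O[atTop] fun T : ℕ => 1 / Real.sqrt T)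
    -- condition C.2
    (cv : ℝ)
    (hC2 : ∀ l, (fun T : ℕ => variance (Ehat l T) P - cv / T)
        =o[atTop] fun T : ℕ => 1 / (T : ℝ))
    -- relaxed weight constraints
    (ε η : ℝ) (hε : 0 < ε) (hη : 0 < η)
    (w : ℕ → Fin L → ℝ)
    (hwsum : ∀ T, ∑ l, w T l = 1)
    (hwnorm : ∀ T, ∑ l, (w T l) ^ 2 ≤ η)
    (hwγ : ∀ i ∈ J, ∀ T : ℕ, 1 ≤ T →
        |∑ l, w T l * ψ i (lbar l)| ≤ ε * (T : ℝ) ^ ((i : ℝ) / (2 * d) - 1 / 2)) :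
    (fun T : ℕ => ∫ ω, (∑ l, w T l * Ehat l T ω - θ) ^ 2 ∂P)
      =O[atTop] fun T : ℕ => 1 / (T : ℝ) :=
  ensemble_estimator_relaxed_weights_MSE_general P L d lbar Ehat θ hL2 J c ψ hC1 cv hC2 ε η w hwsum
    hwnorm hwγ
end
end
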